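/- arXiv:1604.08475 — 5 statements merged into one kernel-verified Lean document; each statement's English description precedes it below -/
import Mathlib

section
/- There exists a real number γ such that (a − b·γ)·h_xx + (b − c·γ)·h_xy > 0 if and only if (b·h_xx + c·h_xy ≠ 0 or h_xx > 0). -/
/-! The stabilizability expression is affine in `γ`, with slope `-(b hxx + c hxy)`, so it takes a
positive value unless that slope vanishes and the constant term `a hxx + b hxy` is not positive.
When the slope vanishes, `c (a hxx + b hxy) = (a c - b²) hxx`, so the constant term has the sign
of `hxx`. -/

theorem exists_sub_mul_pos_iff {K : Type*} [Field K] [LinearOrder K] [IsStrictOrderedRing K]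
    (p k : K) : (∃ γ : K, 0 < p - γ * k) ↔ k ≠ 0 ∨ 0 < p := by
  constructor
  · rintro ⟨γ, hγ⟩
    refine or_iff_not_imp_left.mpr fun hk => ?_
    simpa [not_not.mp hk] using hγ
  · rintro (hk | hp)
    · exact ⟨(p - 1) / k, by rw [div_mul_cancel₀ _ hk]; norm_num⟩
    · exact ⟨0, by simpa using hp⟩

theorem stabilizability_iff_general (a b c hxx hxy : ℝ)
    (hc : 0 < c) (hdet : 0 < a * c - b ^ 2) :
    (∃ γ : ℝ, (a - b * γ) * hxx + (b - c * γ) * hxy > 0) ↔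
      (b * hxx + c * hxy ≠ 0 ∨ hxx > 0) := by
  have affine (γ : ℝ) : (a - b * γ) * hxx + (b - c * γ) * hxy
      = (a * hxx + b * hxy) - γ * (b * hxx + c * hxy) := by ring
  simp only [gt_iff_lt, affine, exists_sub_mul_pos_iff]
  refine or_congr_right' fun hk => ?_
  have hconst : c * (a * hxx + b * hxy) = (a * c - b ^ 2) * hxx := by
    linear_combination b * not_not.mp hk
  rw [← mul_pos_iff_of_pos_left hc, hconst, mul_pos_iff_of_pos_left hdet]

theorem stabilizability_iff (a b c hxx hxy : ℝ)
    (ha : 0 < a) (hc : 0 < c) (hdet : 0 < a * c - b ^ 2) :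
    (∃ γ : ℝ, (a - b * γ) * hxx + (b - c * γ) * hxy > 0) ↔
      (b * hxx + c * hxy ≠ 0 ∨ hxx > 0) :=
  stabilizability_iff_general a b c hxx hxy hc hdet
end

section
/- If h_xx ≤ 0 and b·h_xx + c·h_xy = 0, then for every real number γ one has (a − b·γ)·h_xx + (b − c·γ)·h_xy = ((a·c − b²)/c)·h_xx, and this quantity is ≤ 0; hence the stabilizability inequality fails for every γ. -/
theorem stabilizability_fails (a b c hxx hxy : ℝ)
    (ha : 0 < a) (hc : 0 < c) (hdet : 0 < a * c - b ^ 2)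
    (h1 : hxx ≤ 0) (h2 : b * hxx + c * hxy = 0) :
    ∀ γ : ℝ,
      (a - b * γ) * hxx + (b - c * γ) * hxy = ((a * c - b ^ 2) / c) * hxx ∧
      ((a * c - b ^ 2) / c) * hxx ≤ 0 ∧
      ¬ ((a - b * γ) * hxx + (b - c * γ) * hxy > 0) := by
  intro γ
  have hxy' : hxy = -(b * hxx) / c := by field_simp; linarith
  have heq : (a - b * γ) * hxx + (b - c * γ) * hxy = ((a * c - b ^ 2) / c) * hxx := by
    subst hxy'; field_simp; ring
  have hle : ((a * c - b ^ 2) / c) * hxx ≤ 0 :=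
    mul_nonpos_of_nonneg_of_nonpos (le_of_lt (div_pos hdet hc)) h1
  exact ⟨heq, hle, by rw [heq]; linarith⟩
end

section
/- Let a, b, c, h_xx, h_xy, γ, s, r'' be real numbers with b − c·γ ≠ 0, s > 0, P := (a − b·γ)·h_xx + (b − c·γ)·h_xy > 0, and r'' > h_xx²·s/P. Define v_xx := r'', v_xy := (h_xx·s − (a − b·γ)·r'')/(b − c·γ), and v_yy := (h_xy·s·(b − c·γ) − (a − b·γ)·h_xx·s + (a − b·γ)²·r'')/(b − c·γ)². Then v_xx > 0 and v_xx·v_yy − v_xy² > 0; equivalently, the symmetric 2×2 matrix [[v_xx, v_xy], [v_xy, v_yy]] is positive definite. -/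
/-! The determinant `v_xx v_yy − v_xy²` simplifies to `s · (r'' P − h_xx² s) / (b − cγ)²`, which is
positive exactly under the hypothesis on `r''`; since also `v_xx = r'' > 0`, Sylvester's criterion
for `2 × 2` symmetric matrices (completing the square in the quadratic form) gives positive
definiteness. -/

section TwoByTwo

variable {R : Type*} [CommRing R] [LinearOrder R] [IsStrictOrderedRing R]

theorem quadratic_pos_of_det_pos {p q r x y : R} (hp : 0 < p) (hdet : 0 < p * r - q ^ 2)
    (hxy : x ≠ 0 ∨ y ≠ 0) : 0 < p * x ^ 2 + 2 * q * x * y + r * y ^ 2 := by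
  have hcompleted : p * (p * x ^ 2 + 2 * q * x * y + r * y ^ 2) =
      (p * x + q * y) ^ 2 + (p * r - q ^ 2) * y ^ 2 := by ring
  have hscaled : 0 < p * (p * x ^ 2 + 2 * q * x * y + r * y ^ 2) := by
    rw [hcompleted]
    rcases eq_or_ne y 0 with rfl | hy
    · have hx : x ≠ 0 := hxy.resolve_right (not_not.mpr rfl)
      simp only [mul_zero, add_zero, ne_eq, OfNat.ofNat_ne_zero, not_false_eq_true, zero_pow]
      positivity
    · positivity
  exact pos_of_mul_pos_right hscaled hp.le

theorem Matrix.posDef_fin_two_of_det_pos [StarRing R] [TrivialStar R] {p q r : R} (hp : 0 < p)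
    (hdet : 0 < p * r - q ^ 2) : Matrix.PosDef !![p, q; q, r] := by
  refine Matrix.PosDef.of_dotProduct_mulVec_pos ?_ fun v hv => ?_
  · exact Matrix.IsHermitian.ext fun i j => by fin_cases i <;> fin_cases j <;> simp
  · have hv' : v 0 ≠ 0 ∨ v 1 ≠ 0 := by
      by_contra! h
      exact hv (funext fun i => by fin_cases i <;> simp [h.1, h.2])
    convert quadratic_pos_of_det_pos hp hdet hv' using 1
    simp only [dotProduct, Pi.star_apply, star_trivial, cons_mulVec, Fin.sum_univ_two,
      cons_val_zero, cons_val_one, cons_val_fin_one, empty_mulVec]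
    ring

end TwoByTwo

theorem hessian_det_eq {K : Type*} [Field K] {α d hxx hxy s r : K} (hd : d ≠ 0) :
    r * ((hxy * s * d - α * hxx * s + α ^ 2 * r) / d ^ 2) - ((hxx * s - α * r) / d) ^ 2 =
      s * (r * (α * hxx + d * hxy) - hxx ^ 2 * s) / d ^ 2 := by
  field_simp
  ring

theorem hessian_posdef_of_choice (a b c hxx hxy γ s r'' vxx vxy vyy : ℝ)
    (hbc : b - c * γ ≠ 0) (hs : s > 0)
    (hP : (a - b * γ) * hxx + (b - c * γ) * hxy > 0)
    (hr : r'' > hxx ^ 2 * s / ((a - b * γ) * hxx + (b - c * γ) * hxy))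
    (hvxx : vxx = r'')
    (hvxy : vxy = (hxx * s - (a - b * γ) * r'') / (b - c * γ))
    (hvyy : vyy = (hxy * s * (b - c * γ) - (a - b * γ) * hxx * s
        + (a - b * γ) ^ 2 * r'') / (b - c * γ) ^ 2) :
    vxx > 0 ∧ vxx * vyy - vxy ^ 2 > 0 ∧
      Matrix.PosDef !![vxx, vxy; vxy, vyy] := by
  have hpos : 0 < vxx := hvxx ▸ lt_of_le_of_lt (by positivity) hr
  have hgap : 0 < r'' * ((a - b * γ) * hxx + (b - c * γ) * hxy) - hxx ^ 2 * s := by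
    rw [gt_iff_lt, div_lt_iff₀ hP] at hr
    linarith
  have hdet : 0 < vxx * vyy - vxy ^ 2 := by
    rw [hvxx, hvxy, hvyy, hessian_det_eq hbc]
    positivity
  exact ⟨hpos, hdet, Matrix.posDef_fin_two_of_det_pos hpos hdet⟩
end

section
/- Let a, b, c, h_xx, h_xy, γ, s, r'' be real numbers with b − c·γ ≠ 0, s > 0 and r'' > 0. Define v_xx := r'', v_xy := (h_xx·s − (a − b·γ)·r'')/(b − c·γ), and v_yy := (h_xy·s·(b − c·γ) − (a − b·γ)·h_xx·s + (a − b·γ)²·r'')/(b − c·γ)². If v_xx > 0 and v_xx·v_yy − v_xy² > 0 (i.e. the matrix [[v_xx, v_xy], [v_xy, v_yy]] is positive definite), then (a − b·γ)·h_xx + (b − c·γ)·h_xy > 0. -/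
theorem stabilizability_necessary_of_hessian_posdef
    (a b c hxx hxy γ s r'' vxx vxy vyy : ℝ)
    (hbc : b - c * γ ≠ 0) (hs : s > 0) (hr : r'' > 0)
    (hvxx : vxx = r'')
    (hvxy : vxy = (hxx * s - (a - b * γ) * r'') / (b - c * γ))
    (hvyy : vyy = (hxy * s * (b - c * γ) - (a - b * γ) * hxx * s
        + (a - b * γ) ^ 2 * r'') / (b - c * γ) ^ 2)
    (hpos1 : vxx > 0) (hpos2 : vxx * vyy - vxy ^ 2 > 0) :
    (a - b * γ) * hxx + (b - c * γ) * hxy > 0 := by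
  subst hvxx hvxy hvyy
  have hB2 : (b - c * γ) ^ 2 > 0 := by positivity
  have h2 := mul_pos hpos2 hB2
  field_simp at h2
  nlinarith [sq_nonneg (hxx * s), mul_pos hr hs]
end

section
/- Let a, b, c, γ, M be real numbers with a − b·γ ≠ 0 and b − c·γ ≠ 0, set Υ := (a − b·γ)/(b − c·γ), and let s, r : ℝ → ℝ be differentiable. Define v : ℝ² → ℝ by v(θ, ψ) := (M·s(θ − Υ·ψ)/(a − b·γ))·(cos θ − cos(θ − Υ·ψ)) + r(θ − Υ·ψ). Then v is differentiable and satisfies (a − b·γ)·∂v/∂θ(θ, ψ) + (b − c·γ)·∂v/∂ψ(θ, ψ) = −M·s(θ − Υ·ψ)·sin θ for all (θ, ψ) ∈ ℝ². Moreover v(θ, 0) = r(θ) for all θ. -/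
/-!
With `α = a - b γ`, `β = b - c γ` and `Υ = α / β`, the characteristic variable `u = θ - Υ ψ` has
zero derivative in the direction `(α, β)`, so every function of `u` does too. The transport
operator `α ∂_θ + β ∂_ψ` therefore sees in `v = (M s(u) / α) (cos θ - cos u) + r(u)` only the
factor `cos θ`, whose derivative in that direction is `-α sin θ`.
-/

open Real

section DirectionalDerivative

variable {E F : Type*} [NormedAddCommGroup E] [NormedSpace ℝ E] [NormedAddCommGroup F]
  [NormedSpace ℝ F] {u : E → ℝ} {p w : E}

theorem fderiv_comp_apply_eq_zero_of_fderiv_apply_eq_zero {g : ℝ → F}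
    (hg : DifferentiableAt ℝ g (u p)) (hu : DifferentiableAt ℝ u p) (hw : fderiv ℝ u p w = 0) :
    fderiv ℝ (fun q => g (u q)) p w = 0 := by
  rw [fderiv_fun_comp p hg hu, ContinuousLinearMap.comp_apply, hw, map_zero]

theorem fderiv_comp_mul_add_comp_apply {g h : ℝ → ℝ} {k : E → ℝ}
    (hg : DifferentiableAt ℝ g (u p)) (hh : DifferentiableAt ℝ h (u p))
    (hk : DifferentiableAt ℝ k p) (hu : DifferentiableAt ℝ u p) (hw : fderiv ℝ u p w = 0) :
    fderiv ℝ (fun q => g (u q) * k q + h (u q)) p w = g (u p) * fderiv ℝ k p w := by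
  have hgu : DifferentiableAt ℝ (fun q => g (u q)) p := hg.comp p hu
  have hhu : DifferentiableAt ℝ (fun q => h (u q)) p := hh.comp p hu
  rw [fderiv_fun_add (hgu.fun_mul hk) hhu, fderiv_fun_mul hgu hk]
  simp only [add_apply, smul_apply, smul_eq_mul,
    fderiv_comp_apply_eq_zero_of_fderiv_apply_eq_zero hg hu hw,
    fderiv_comp_apply_eq_zero_of_fderiv_apply_eq_zero hh hu hw]
  ring

end DirectionalDerivative

theorem ContinuousLinearMap.apply_mk_eq_smul_add_smul {F : Type*} [NormedAddCommGroup F]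
    [NormedSpace ℝ F] (L : ℝ × ℝ →L[ℝ] F) (x y : ℝ) :
    L (x, y) = x • L (1, 0) + y • L (0, 1) := by
  rw [← L.map_smul, ← L.map_smul, ← L.map_add]
  simp

theorem hasFDerivAt_fst_sub_mul_snd (Υ : ℝ) (p : ℝ × ℝ) :
    HasFDerivAt (fun q : ℝ × ℝ => q.1 - Υ * q.2)
      (ContinuousLinearMap.fst ℝ ℝ ℝ - Υ • ContinuousLinearMap.snd ℝ ℝ ℝ) p :=
  hasFDerivAt_fst.sub (hasFDerivAt_snd.const_mul Υ)

theorem fderiv_fst_sub_div_mul_snd_apply {α β : ℝ} (hβ : β ≠ 0) (p : ℝ × ℝ) :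
    fderiv ℝ (fun q : ℝ × ℝ => q.1 - α / β * q.2) p (α, β) = 0 := by
  rw [(hasFDerivAt_fst_sub_mul_snd (α / β) p).fderiv]
  simp [hβ]

theorem fderiv_cos_fst_sub_cos_comp_apply {u : ℝ × ℝ → ℝ} {p w : ℝ × ℝ}
    (hu : DifferentiableAt ℝ u p) (hw : fderiv ℝ u p w = 0) :
    fderiv ℝ (fun q : ℝ × ℝ => cos q.1 - cos (u q)) p w = -(sin p.1 * w.1) := by
  have hcos :
      HasFDerivAt (fun q : ℝ × ℝ => cos q.1) (-sin p.1 • ContinuousLinearMap.fst ℝ ℝ ℝ) p :=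
    (hasDerivAt_cos p.1).comp_hasFDerivAt p hasFDerivAt_fst
  have hcosu : DifferentiableAt ℝ (fun q => cos (u q)) p := hu.cos
  rw [fderiv_fun_sub hcos.differentiableAt hcosu, hcos.fderiv, sub_apply,
    fderiv_comp_apply_eq_zero_of_fderiv_apply_eq_zero differentiableAt_cos hu hw]
  simp

theorem potential_equation_solution_inertia_wheel (a b c γ M : ℝ)
    (habg : a - b * γ ≠ 0) (hbc : b - c * γ ≠ 0)
    (s r : ℝ → ℝ) (hs : Differentiable ℝ s) (hr : Differentiable ℝ r) :
    Differentiable ℝ (fun p : ℝ × ℝ =>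
        (M * s (p.1 - ((a - b * γ) / (b - c * γ)) * p.2) / (a - b * γ)) *
            (Real.cos p.1 - Real.cos (p.1 - ((a - b * γ) / (b - c * γ)) * p.2)) +
          r (p.1 - ((a - b * γ) / (b - c * γ)) * p.2)) ∧
    (∀ θ ψ : ℝ,
      (a - b * γ) *
          fderiv ℝ (fun p : ℝ × ℝ =>
            (M * s (p.1 - ((a - b * γ) / (b - c * γ)) * p.2) / (a - b * γ)) *
                (Real.cos p.1 - Real.cos (p.1 - ((a - b * γ) / (b - c * γ)) * p.2)) +
              r (p.1 - ((a - b * γ) / (b - c * γ)) * p.2)) (θ, ψ) (1, 0) +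
        (b - c * γ) *
          fderiv ℝ (fun p : ℝ × ℝ =>
            (M * s (p.1 - ((a - b * γ) / (b - c * γ)) * p.2) / (a - b * γ)) *
                (Real.cos p.1 - Real.cos (p.1 - ((a - b * γ) / (b - c * γ)) * p.2)) +
              r (p.1 - ((a - b * γ) / (b - c * γ)) * p.2)) (θ, ψ) (0, 1)
        = -(M * s (θ - ((a - b * γ) / (b - c * γ)) * ψ) * Real.sin θ)) ∧
    (∀ θ : ℝ,
      (M * s (θ - ((a - b * γ) / (b - c * γ)) * 0) / (a - b * γ)) *
          (Real.cos θ - Real.cos (θ - ((a - b * γ) / (b - c * γ)) * 0)) +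
        r (θ - ((a - b * γ) / (b - c * γ)) * 0) = r θ) := by
  set α := a - b * γ
  set β := b - c * γ
  have hu : Differentiable ℝ fun q : ℝ × ℝ => q.1 - α / β * q.2 := by fun_prop
  refine ⟨by fun_prop, fun θ ψ => ?_, fun θ => by simp⟩
  have hw := fderiv_fst_sub_div_mul_snd_apply (α := α) hbc (θ, ψ)
  rw [← smul_eq_mul α, ← smul_eq_mul β, ← ContinuousLinearMap.apply_mk_eq_smul_add_smul,
    fderiv_comp_mul_add_comp_apply (g := fun t => M * s t / α)
      (k := fun q => cos q.1 - cos (q.1 - α / β * q.2)) ((hs _).const_mul M |>.div_const α)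
      (hr _) (by fun_prop) (hu _) hw,
    fderiv_cos_fst_sub_cos_comp_apply (hu _) hw]
  field_simp
end
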